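/- arXiv:2411.11345 — 4 statements merged into one kernel-verified Lean document; each statement's English description precedes it below -/
import Mathlib

section
/- The potential Φ satisfies, for every x ∈ ℝ^m and every v ∈ ℝ^m, the Hessian identity D²Φ(x)(v,v) = 2·g_x(v) = 2·Σ_{a∈A} λ_a(x)·⟨a − μ(x), v⟩²; moreover, if the affine span of A is all of ℝ^m, then Φ is strictly convex on ℝ^m. -/
open scoped BigOperators RealInnerProductSpace
open Finset

noncomputable section

/-- `ℝ^m` with the standard (Euclidean) inner product. -/
abbrev Vm (m : ℕ) := EuclideanSpace ℝ (Fin m)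

/-- The diagonal covariance `K(x) = Σ_{a∈A} α_a² exp(2⟨a,x⟩)`. -/
def covK {m : ℕ} (A : Finset (Vm m)) (α : Vm m → ℝ) (x : Vm m) : ℝ :=
  ∑ a ∈ A, (α a) ^ 2 * Real.exp (2 * ⟪a, x⟫)

/-- The potential `Φ(x) = (1/2) log K(x)`. -/
def pot {m : ℕ} (A : Finset (Vm m)) (α : Vm m → ℝ) (x : Vm m) : ℝ :=
  (1 / 2) * Real.log (covK A α x)

/-- The weights `λ_a(x) = α_a² exp(2⟨a,x⟩)/K(x)`. -/
def wt {m : ℕ} (A : Finset (Vm m)) (α : Vm m → ℝ) (a x : Vm m) : ℝ :=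
  (α a) ^ 2 * Real.exp (2 * ⟪a, x⟫) / covK A α x

/-- The moment map `μ(x) = Σ_{a∈A} λ_a(x) • a`. -/
def mmap {m : ℕ} (A : Finset (Vm m)) (α : Vm m → ℝ) (x : Vm m) : Vm m :=
  ∑ a ∈ A, wt A α a x • a

/-- The Adler–Taylor quadratic form `g_x(v) = Σ_{a∈A} λ_a(x)·⟨a − μ(x), v⟩²`. -/
def atForm {m : ℕ} (A : Finset (Vm m)) (α : Vm m → ℝ) (x v : Vm m) : ℝ :=
  ∑ a ∈ A, wt A α a x * ⟪a - mmap A α x, v⟫ ^ 2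

/-!
Since `K = exp (2Φ)`, the weights are `λ_a = α_a² exp (2 (⟨a, ·⟩ - Φ))`; hence `dΦ = ⟨μ, ·⟩` and
`dλ_a = 2 λ_a ⟨a - μ, ·⟩`. Differentiating `⟨μ, v⟩ = Σ λ_a ⟨a, v⟩` once more gives twice the
variance of `⟨a, v⟩` under the probability weights `λ`, which is `2 g_x(v)`.

For strict convexity, `K (s x + t y) = K(x)^s K(y)^t Σ λ_a(x)^s λ_a(y)^t`, and by weighted AM–GM
the sum is `< Σ (s λ_a(x) + t λ_a(y)) = 1` unless `λ(x) = λ(y)`. Equal weights at `x` and `y`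
force `⟨a, x - y⟩` to be constant on `A`, so `x = y` once `A` affinely spans `ℝ^m`.
-/

lemma Finset.sum_mul_sub_mean_mul_eq_sum_mul_sub_mean_sq {ι : Type*} (s : Finset ι)
    (w t : ι → ℝ) (hw : ∑ i ∈ s, w i = 1) :
    ∑ i ∈ s, w i * (t i - ∑ j ∈ s, w j * t j) * t i =
      ∑ i ∈ s, w i * (t i - ∑ j ∈ s, w j * t j) ^ 2 := by
  set μ := ∑ j ∈ s, w j * t j
  have hcentred : ∑ i ∈ s, w i * (t i - μ) * μ = 0 := by
    simp only [mul_sub, sub_mul, Finset.sum_sub_distrib, ← Finset.sum_mul, hw]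
    ring
  rw [← sub_eq_zero, ← Finset.sum_sub_distrib, ← hcentred]
  exact Finset.sum_congr rfl fun i _ => by ring

lemma eq_zero_of_forall_inner_eq_of_affineSpan_eq_top {E : Type*} [NormedAddCommGroup E]
    [InnerProductSpace ℝ E] {s : Set E} (hs : affineSpan ℝ s = ⊤) {d : E} {c : ℝ}
    (h : ∀ p ∈ s, ⟪p, d⟫ = c) : d = 0 := by
  have hker : vectorSpan ℝ s ≤ LinearMap.ker (innerₛₗ ℝ d) := by
    rw [vectorSpan_def, Submodule.span_le]
    rintro _ ⟨p, hp, q, hq, rfl⟩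
    simp only [SetLike.mem_coe, LinearMap.mem_ker, innerₛₗ_apply_apply, vsub_eq_sub]
    rw [inner_sub_right, real_inner_comm p, real_inner_comm q, h p hp, h q hq, sub_self]
  have hd : d ∈ vectorSpan ℝ s := by
    simp [AffineSubspace.vectorSpan_eq_top_of_affineSpan_eq_top ℝ E E hs]
  simpa using hker hd

def expTerm {m : ℕ} (α : Vm m → ℝ) (p x : Vm m) : ℝ :=
  α p ^ 2 * Real.exp (2 * ⟪p, x⟫)

lemma covK_eq_sum_expTerm {m : ℕ} (A : Finset (Vm m)) (α : Vm m → ℝ) (x : Vm m) :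
    covK A α x = ∑ p ∈ A, expTerm α p x := rfl

lemma wt_eq_expTerm_div {m : ℕ} (A : Finset (Vm m)) (α : Vm m → ℝ) (p x : Vm m) :
    wt A α p x = expTerm α p x / covK A α x := rfl

lemma hasFDerivAt_expTerm {m : ℕ} (α : Vm m → ℝ) (p x : Vm m) :
    HasFDerivAt (expTerm α p) ((2 * expTerm α p x) • innerSL ℝ p) x := by
  have h := ((((innerSL ℝ p).hasFDerivAt (x := x)).const_mul (2 : ℝ)).exp).const_mul (α p ^ 2)
  refine h.congr_fderiv ?_
  rw [smul_smul, smul_smul, expTerm, innerSL_apply_apply]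
  ring_nf

lemma expTerm_pos {m : ℕ} {α : Vm m → ℝ} {p : Vm m} (hp : 0 < α p) (x : Vm m) :
    0 < expTerm α p x := by
  unfold expTerm; positivity

lemma expTerm_convexComb {m : ℕ} (α : Vm m → ℝ) (p x y : Vm m) {a b : ℝ} (hab : a + b = 1) :
    expTerm α p (a • x + b • y) = expTerm α p x ^ a * expTerm α p y ^ b := by
  simp only [expTerm]
  rw [Real.mul_rpow (sq_nonneg _) (Real.exp_pos _).le,
    Real.mul_rpow (sq_nonneg _) (Real.exp_pos _).le, ← Real.exp_mul, ← Real.exp_mul,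
    mul_mul_mul_comm, ← Real.rpow_add' (sq_nonneg _) (by rw [hab]; exact one_ne_zero), hab,
    Real.rpow_one, ← Real.exp_add, inner_add_right, real_inner_smul_right, real_inner_smul_right]
  ring_nf

section
variable {m : ℕ} {A : Finset (Vm m)} {α : Vm m → ℝ}

lemma covK_pos (hA : A.Nonempty) (hα : ∀ a ∈ A, 0 < α a) (x : Vm m) : 0 < covK A α x :=
  Finset.sum_pos (fun p hp => expTerm_pos (hα p hp) x) hA

lemma wt_pos (hA : A.Nonempty) (hα : ∀ a ∈ A, 0 < α a) {p : Vm m} (hp : p ∈ A) (x : Vm m) :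
    0 < wt A α p x :=
  div_pos (expTerm_pos (hα p hp) x) (covK_pos hA hα x)

lemma sum_wt (hA : A.Nonempty) (hα : ∀ a ∈ A, 0 < α a) (x : Vm m) :
    ∑ p ∈ A, wt A α p x = 1 := by
  simp only [wt]
  rw [← Finset.sum_div]
  exact div_self (covK_pos hA hα x).ne'

lemma inner_mmap (x v : Vm m) : ⟪mmap A α x, v⟫ = ∑ p ∈ A, wt A α p x * ⟪p, v⟫ := by
  simp only [mmap, sum_inner, real_inner_smul_left]

lemma covK_mul_wt (hA : A.Nonempty) (hα : ∀ a ∈ A, 0 < α a) (p x : Vm m) :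
    covK A α x * wt A α p x = expTerm α p x :=
  mul_div_cancel₀ _ (covK_pos hA hα x).ne'

lemma hasFDerivAt_covK (hA : A.Nonempty) (hα : ∀ a ∈ A, 0 < α a) (x : Vm m) :
    HasFDerivAt (covK A α) ((2 * covK A α x) • innerSL ℝ (mmap A α x)) x := by
  refine (HasFDerivAt.fun_sum fun p _ => hasFDerivAt_expTerm α p x).congr_fderiv ?_
  ext v
  simp only [FunLike.coe_sum, Finset.sum_apply, FunLike.coe_smul, Pi.smul_apply, smul_eq_mul,
    innerSL_apply_apply, inner_mmap, Finset.mul_sum, ← covK_mul_wt hA hα]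
  exact Finset.sum_congr rfl fun p _ => by ring

lemma hasFDerivAt_pot (hA : A.Nonempty) (hα : ∀ a ∈ A, 0 < α a) (x : Vm m) :
    HasFDerivAt (pot A α) (innerSL ℝ (mmap A α x)) x := by
  refine (((hasFDerivAt_covK hA hα x).log (covK_pos hA hα x).ne').const_mul
    (1 / 2 : ℝ)).congr_fderiv ?_
  rw [smul_smul, smul_smul]
  field_simp [(covK_pos hA hα x).ne']
  simp

lemma wt_eq_exp (hA : A.Nonempty) (hα : ∀ a ∈ A, 0 < α a) (p x : Vm m) :
    wt A α p x = α p ^ 2 * Real.exp (2 * (⟪p, x⟫ - pot A α x)) := by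
  rw [wt, mul_sub, Real.exp_sub, pot, ← mul_assoc, mul_one_div_cancel two_ne_zero, one_mul,
    Real.exp_log (covK_pos hA hα x), mul_div_assoc]

lemma hasFDerivAt_wt (hA : A.Nonempty) (hα : ∀ a ∈ A, 0 < α a) (p x : Vm m) :
    HasFDerivAt (wt A α p) ((2 * wt A α p x) • (innerSL ℝ p - innerSL ℝ (mmap A α x))) x := by
  have h := (((((innerSL ℝ p).hasFDerivAt (x := x)).sub (hasFDerivAt_pot hA hα x)).const_mul
    (2 : ℝ)).exp).const_mul (α p ^ 2)
  rw [funext (wt_eq_exp hA hα p)]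
  refine h.congr_fderiv ?_
  rw [smul_smul, smul_smul]
  congr 1
  simp only [Pi.sub_apply, innerSL_apply_apply]
  ring

lemma hasFDerivAt_inner_mmap (hA : A.Nonempty) (hα : ∀ a ∈ A, 0 < α a) (x v : Vm m) :
    HasFDerivAt (fun y => ⟪mmap A α y, v⟫)
      (∑ p ∈ A, ⟪p, v⟫ • (2 * wt A α p x) • (innerSL ℝ p - innerSL ℝ (mmap A α x))) x := by
  simp only [inner_mmap]
  exact HasFDerivAt.fun_sum fun p _ => (hasFDerivAt_wt hA hα p x).mul_const ⟪p, v⟫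

lemma fderiv_fderiv_pot_apply (hA : A.Nonempty) (hα : ∀ a ∈ A, 0 < α a) (x v : Vm m) :
    fderiv ℝ (fun y => fderiv ℝ (pot A α) y v) x v = 2 * atForm A α x v := by
  have hgrad : (fun y => fderiv ℝ (pot A α) y v) = fun y => ⟪mmap A α y, v⟫ :=
    funext fun y => by rw [(hasFDerivAt_pot hA hα y).fderiv, innerSL_apply_apply]
  rw [hgrad, (hasFDerivAt_inner_mmap hA hα x v).fderiv, atForm]
  simp only [FunLike.coe_sum, Finset.sum_apply, FunLike.coe_smul, Pi.smul_apply, smul_eq_mul,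
    _root_.sub_apply, innerSL_apply_apply, inner_sub_left, inner_mmap]
  rw [← Finset.sum_mul_sub_mean_mul_eq_sum_mul_sub_mean_sq A _ _ (sum_wt hA hα x), Finset.mul_sum]
  exact Finset.sum_congr rfl fun p _ => by ring

lemma covK_convexComb (hA : A.Nonempty) (hα : ∀ a ∈ A, 0 < α a) (x y : Vm m) {a b : ℝ}
    (hab : a + b = 1) :
    covK A α (a • x + b • y) =
      covK A α x ^ a * covK A α y ^ b * ∑ p ∈ A, wt A α p x ^ a * wt A α p y ^ b := by
  have hKx := covK_pos hA hα x
  have hKy := covK_pos hA hα y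
  rw [covK_eq_sum_expTerm, Finset.mul_sum]
  refine Finset.sum_congr rfl fun p hp => ?_
  have hex := (expTerm_pos (hα p hp) x).le
  have hey := (expTerm_pos (hα p hp) y).le
  rw [expTerm_convexComb α p x y hab, wt_eq_expTerm_div, wt_eq_expTerm_div,
    Real.div_rpow hex hKx.le, Real.div_rpow hey hKy.le]
  field_simp

lemma sum_wt_rpow_mul_wt_rpow_lt_one (hA : A.Nonempty) (hα : ∀ a ∈ A, 0 < α a) {x y : Vm m}
    (hxy : ∃ p ∈ A, wt A α p x ≠ wt A α p y) {a b : ℝ} (ha : 0 < a) (hb : 0 < b)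
    (hab : a + b = 1) :
    ∑ p ∈ A, wt A α p x ^ a * wt A α p y ^ b < 1 := by
  have hwt : ∀ p ∈ A, ∀ z, 0 ≤ wt A α p z := fun p hp z => (wt_pos hA hα hp z).le
  obtain ⟨p₀, hp₀, hne⟩ := hxy
  calc ∑ p ∈ A, wt A α p x ^ a * wt A α p y ^ b
      < ∑ p ∈ A, (a * wt A α p x + b * wt A α p y) := by
        refine Finset.sum_lt_sum (fun p hp => Real.geom_mean_le_arith_mean2_weighted ha.le hb.le
          (hwt p hp x) (hwt p hp y) hab) ⟨p₀, hp₀, ?_⟩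
        exact (Real.geom_mean_lt_arith_mean2_weighted_iff_of_pos ha hb (hwt p₀ hp₀ x)
          (hwt p₀ hp₀ y) hab).2 hne
    _ = 1 := by
        rw [Finset.sum_add_distrib, ← Finset.mul_sum, ← Finset.mul_sum, sum_wt hA hα,
          sum_wt hA hα, mul_one, mul_one, hab]

lemma exists_wt_ne (hA : A.Nonempty) (hα : ∀ a ∈ A, 0 < α a)
    (hspan : affineSpan ℝ (A : Set (Vm m)) = ⊤) {x y : Vm m} (hxy : x ≠ y) :
    ∃ p ∈ A, wt A α p x ≠ wt A α p y := by
  by_contra! hwt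
  refine sub_ne_zero.2 hxy (eq_zero_of_forall_inner_eq_of_affineSpan_eq_top hspan
    (c := pot A α x - pot A α y) fun p hp => ?_)
  have h := hwt p hp
  rw [wt_eq_exp hA hα, wt_eq_exp hA hα, mul_right_inj' (pow_pos (hα p hp) 2).ne',
    Real.exp_eq_exp] at h
  rw [inner_sub_right]
  linarith

lemma strictConvexOn_pot (hA : A.Nonempty) (hα : ∀ a ∈ A, 0 < α a)
    (hspan : affineSpan ℝ (A : Set (Vm m)) = ⊤) : StrictConvexOn ℝ Set.univ (pot A α) := by
  refine ⟨convex_univ, fun x _ y _ hxy a b ha hb hab => ?_⟩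
  have hKx := covK_pos hA hα x
  have hKy := covK_pos hA hα y
  have hS := sum_wt_rpow_mul_wt_rpow_lt_one hA hα (exists_wt_ne hA hα hspan hxy) ha hb hab
  have hS_pos : 0 < ∑ p ∈ A, wt A α p x ^ a * wt A α p y ^ b :=
    Finset.sum_pos (fun p hp => by
      have := wt_pos hA hα hp x
      have := wt_pos hA hα hp y
      positivity) hA
  have hlog := Real.log_neg hS_pos hS
  simp only [pot, smul_eq_mul, covK_convexComb hA hα x y hab]
  rw [Real.log_mul (by positivity) hS_pos.ne', Real.log_mul (by positivity) (by positivity),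
    Real.log_rpow hKx, Real.log_rpow hKy]
  linarith

end

theorem statement0_general (m : ℕ) (A : Finset (Vm m)) (hA : A.Nonempty)
    (α : Vm m → ℝ) (hα : ∀ a ∈ A, 0 < α a) :
    (∀ x v : Vm m,
      fderiv ℝ (fun y => fderiv ℝ (pot A α) y v) x v = 2 * atForm A α x v ∧
      atForm A α x v = ∑ a ∈ A, wt A α a x * ⟪a - mmap A α x, v⟫ ^ 2) ∧
    (affineSpan ℝ (A : Set (Vm m)) = ⊤ →
      StrictConvexOn ℝ (Set.univ : Set (Vm m)) (pot A α)) :=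
  ⟨fun x v => ⟨fderiv_fderiv_pot_apply hA hα x v, rfl⟩, strictConvexOn_pot hA hα⟩

/-- The Hessian of the potential `Φ` satisfies
`D²Φ(x)(v,v) = 2 g_x(v) = 2 Σ_a λ_a(x) ⟨a − μ(x), v⟩²`, and if the affine span of `A`
is all of `ℝ^m` then `Φ` is strictly convex. -/
theorem statement0 (m : ℕ) (hm : 1 ≤ m) (A : Finset (Vm m)) (hA : A.Nonempty)
    (α : Vm m → ℝ) (hα : ∀ a ∈ A, 0 < α a) :
    (∀ x v : Vm m,
      fderiv ℝ (fun y => fderiv ℝ (pot A α) y v) x v = 2 * atForm A α x v ∧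
      atForm A α x v = ∑ a ∈ A, wt A α a x * ⟪a - mmap A α x, v⟫ ^ 2) ∧
    (affineSpan ℝ (A : Set (Vm m)) = ⊤ →
      StrictConvexOn ℝ (Set.univ : Set (Vm m)) (pot A α)) :=
  statement0_general m A hA α hα
end
end

section
/- Assume the affine span of A is all of ℝ^m. Then the moment map μ : ℝ^m → ℝ^m is a diffeomorphism onto the interior of the Newton polytope P: μ is smooth, injective, its differential at every point is invertible, μ(x) lies in the interior of P for every x, and every point of the interior of P equals μ(x) for some x ∈ ℝ^m. -/
open scoped BigOperators RealInnerProductSpace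
open Finset

noncomputable section

namespace S1

variable {m : ℕ} {A : Finset (Vm m)} {α : Vm m → ℝ}

lemma covK_pos (hA : A.Nonempty) (hα : ∀ a ∈ A, 0 < α a) (x : Vm m) :
    0 < covK A α x := by
  refine Finset.sum_pos (fun a ha => ?_) hA
  exact mul_pos (pow_pos (hα a ha) 2) (Real.exp_pos _)

lemma wt_pos (hA : A.Nonempty) (hα : ∀ a ∈ A, 0 < α a) {a : Vm m} (ha : a ∈ A) (x : Vm m) :
    0 < wt A α a x :=
  div_pos (mul_pos (pow_pos (hα a ha) 2) (Real.exp_pos _)) (covK_pos hA hα x)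

lemma sum_wt (hA : A.Nonempty) (hα : ∀ a ∈ A, 0 < α a) (x : Vm m) :
    ∑ a ∈ A, wt A α a x = 1 := by
  have h := (covK_pos hA hα x).ne'
  simp only [wt, ← Finset.sum_div]
  rw [← covK, div_self h]

lemma inner_mmap (x v : Vm m) :
    ⟪mmap A α x, v⟫ = ∑ a ∈ A, wt A α a x * ⟪a, v⟫ := by
  simp [mmap, sum_inner, real_inner_smul_left, Finset.mul_sum, mul_assoc]

lemma eq_zero_of_inner_const (hspan : affineSpan ℝ (A : Set (Vm m)) = ⊤)
    {v : Vm m} {c : ℝ} (h : ∀ a ∈ A, ⟪a, v⟫ = c) : v = 0 := by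
  have hvs : vectorSpan ℝ (A : Set (Vm m)) = ⊤ := by
    rw [← direction_affineSpan, hspan]; exact AffineSubspace.direction_top ℝ _ _
  have hgen : ∀ u ∈ ((A : Set (Vm m)) -ᵥ (A : Set (Vm m))), ⟪u, v⟫ = 0 := by
    rintro u hu
    rcases Set.mem_vsub.mp hu with ⟨a, ha, b, hb, rfl⟩
    have : a -ᵥ b = a - b := rfl
    rw [this, inner_sub_left, h a ha, h b hb, sub_self]
  have hall : ∀ u ∈ vectorSpan ℝ (A : Set (Vm m)), ⟪u, v⟫ = 0 := by
    intro u hu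
    rw [vectorSpan_def] at hu
    induction hu using Submodule.span_induction with
    | mem u hu => exact hgen u hu
    | zero => exact inner_zero_left v
    | add u w _ _ hu hw => rw [inner_add_left, hu, hw, add_zero]
    | smul r u _ hu => rw [real_inner_smul_left, hu, mul_zero]
  have : ⟪v, v⟫ = 0 := hall v (hvs ▸ Submodule.mem_top)
  exact inner_self_eq_zero.mp this

lemma atForm_pos (hA : A.Nonempty) (hα : ∀ a ∈ A, 0 < α a)
    (hspan : affineSpan ℝ (A : Set (Vm m)) = ⊤)
    (x : Vm m) {v : Vm m} (hv : v ≠ 0) : 0 < atForm A α x v := by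
  have hnn : ∀ a ∈ A, 0 ≤ wt A α a x * ⟪a - mmap A α x, v⟫ ^ 2 := fun a ha =>
    mul_nonneg (wt_pos hA hα ha x).le (sq_nonneg _)
  rcases (Finset.sum_nonneg hnn).lt_or_eq with h | h
  · exact h
  · exfalso
    apply hv
    refine eq_zero_of_inner_const hspan (c := ⟪mmap A α x, v⟫) (fun a ha => ?_)
    have := (Finset.sum_eq_zero_iff_of_nonneg hnn).mp h.symm a ha
    have h2 : ⟪a - mmap A α x, v⟫ ^ 2 = 0 := by
      rcases mul_eq_zero.mp this with h' | h'
      · exact absurd h' (wt_pos hA hα ha x).ne'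
      · exact h'
    have h3 : ⟪a - mmap A α x, v⟫ = 0 := pow_eq_zero_iff (n := 2) (by norm_num) |>.mp h2
    rw [inner_sub_left] at h3
    linarith

lemma hasFDerivAt_term (a x : Vm m) :
    HasFDerivAt (fun y => (α a) ^ 2 * Real.exp (2 * ⟪a, y⟫))
      ((2 * ((α a) ^ 2 * Real.exp (2 * ⟪a, x⟫))) • innerSL ℝ a) x := by
  have h1 : HasFDerivAt (fun y : Vm m => ⟪a, y⟫) (innerSL ℝ a) x :=
    (innerSL ℝ a).hasFDerivAt
  have h2 := (h1.const_mul 2).exp.const_mul ((α a) ^ 2)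
  refine h2.congr_fderiv (Eq.symm ?_)
  ext v
  simp [mul_comm, mul_assoc, mul_left_comm]

lemma hasFDerivAt_covK (hA : A.Nonempty) (hα : ∀ a ∈ A, 0 < α a) (x : Vm m) :
    HasFDerivAt (covK A α) ((2 * covK A α x) • innerSL ℝ (mmap A α x)) x := by
  have h := HasFDerivAt.fun_sum (fun a (ha : a ∈ A) => hasFDerivAt_term (α := α) a x)
  refine h.congr_fderiv (Eq.symm ?_)
  ext v
  have hK := (covK_pos hA hα x).ne'
  simp only [ContinuousLinearMap.smul_apply, innerSL_apply_apply, smul_eq_mul,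
    ContinuousLinearMap.coe_sum', Finset.sum_apply]
  rw [inner_mmap]
  rw [Finset.mul_sum]
  refine Finset.sum_congr rfl fun a ha => ?_
  rw [wt]
  field_simp

lemma hasFDerivAt_wt (hA : A.Nonempty) (hα : ∀ a ∈ A, 0 < α a) (a : Vm m) (ha : a ∈ A)
    (x : Vm m) :
    HasFDerivAt (wt A α a) ((2 * wt A α a x) • innerSL ℝ (a - mmap A α x)) x := by
  have hK := covK_pos hA hα x
  have hKinv : HasFDerivAt (fun y => (covK A α y)⁻¹)
      ((-ContinuousLinearMap.mulLeftRight ℝ ℝ (covK A α x)⁻¹ (covK A α x)⁻¹).comp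
        ((2 * covK A α x) • innerSL ℝ (mmap A α x))) x :=
    (hasFDerivAt_inv' hK.ne').comp x (hasFDerivAt_covK hA hα x)
  have h := (hasFDerivAt_term (α := α) a x).mul hKinv
  have heq : wt A α a = fun y => ((α a) ^ 2 * Real.exp (2 * ⟪a, y⟫)) * (covK A α y)⁻¹ := by
    funext y; rw [wt, div_eq_mul_inv]
  rw [heq]
  refine h.congr_fderiv (Eq.symm ?_)
  ext v
  have hE : (0:ℝ) < (α a) ^ 2 * Real.exp (2 * ⟪a, x⟫) :=
    mul_pos (pow_pos (hα a ha) 2) (Real.exp_pos _)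
  simp only [ContinuousLinearMap.smul_apply, innerSL_apply_apply, smul_eq_mul, wt,
    ContinuousLinearMap.add_apply, ContinuousLinearMap.coe_comp', Function.comp_apply,
    ContinuousLinearMap.neg_apply, ContinuousLinearMap.mulLeftRight_apply,
    inner_sub_left]
  field_simp
  ring

def Dmu {m : ℕ} (A : Finset (Vm m)) (α : Vm m → ℝ) (x : Vm m) : Vm m →L[ℝ] Vm m :=
  ∑ a ∈ A, ((2 * wt A α a x) • innerSL ℝ (a - mmap A α x)).smulRight a

lemma hasFDerivAt_mmap (hA : A.Nonempty) (hα : ∀ a ∈ A, 0 < α a) (x : Vm m) :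
    HasFDerivAt (mmap A α) (Dmu A α x) x := by
  have h : ∀ a ∈ A, HasFDerivAt (fun y => wt A α a y • a)
      (((2 * wt A α a x) • innerSL ℝ (a - mmap A α x)).smulRight a) x := fun a ha =>
    (hasFDerivAt_wt hA hα a ha x).smul_const a
  have := HasFDerivAt.fun_sum h
  exact this

lemma Dmu_apply (x v : Vm m) :
    Dmu A α x v = ∑ a ∈ A, (2 * wt A α a x * ⟪a - mmap A α x, v⟫) • a := by
  rw [Dmu, ContinuousLinearMap.sum_apply]
  refine Finset.sum_congr rfl fun a ha => ?_
  rw [ContinuousLinearMap.smulRight_apply, ContinuousLinearMap.smul_apply,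
    innerSL_apply_apply, smul_eq_mul]

lemma inner_Dmu (hA : A.Nonempty) (hα : ∀ a ∈ A, 0 < α a) (x v : Vm m) :
    ⟪Dmu A α x v, v⟫ = 2 * atForm A α x v := by
  rw [Dmu_apply, sum_inner]
  have hz : ∑ a ∈ A, wt A α a x * ⟪a - mmap A α x, v⟫ = 0 := by
    have : ∑ a ∈ A, wt A α a x * ⟪a - mmap A α x, v⟫
        = (∑ a ∈ A, wt A α a x * ⟪a, v⟫) - (∑ a ∈ A, wt A α a x) * ⟪mmap A α x, v⟫ := by
      rw [Finset.sum_mul, ← Finset.sum_sub_distrib]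
      refine Finset.sum_congr rfl fun a ha => ?_
      rw [inner_sub_left]; ring
    rw [this, sum_wt hA hα, one_mul, inner_mmap, sub_self]
  have expand : ∀ a ∈ A, ⟪(2 * wt A α a x * ⟪a - mmap A α x, v⟫) • a, v⟫
      = 2 * (wt A α a x * ⟪a - mmap A α x, v⟫ ^ 2)
        + 2 * ⟪mmap A α x, v⟫ * (wt A α a x * ⟪a - mmap A α x, v⟫) := by
    intro a ha
    rw [real_inner_smul_left]
    have : ⟪a, v⟫ = ⟪a - mmap A α x, v⟫ + ⟪mmap A α x, v⟫ := by
      rw [inner_sub_left]; ring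
    rw [this]; ring
  rw [Finset.sum_congr rfl expand, Finset.sum_add_distrib, ← Finset.mul_sum, ← Finset.mul_sum,
    hz, mul_zero, add_zero, atForm, Finset.mul_sum]

lemma Dmu_injective (hA : A.Nonempty) (hα : ∀ a ∈ A, 0 < α a)
    (hspan : affineSpan ℝ (A : Set (Vm m)) = ⊤) (x : Vm m) :
    Function.Injective (Dmu A α x) := by
  have h0 : ∀ v, Dmu A α x v = 0 → v = 0 := by
    intro v hv
    by_contra hne
    have hpos := atForm_pos hA hα hspan x hne
    have h2 : ⟪Dmu A α x v, v⟫ = 0 := by rw [hv, inner_zero_left]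
    rw [inner_Dmu hA hα] at h2
    linarith
  intro v w hvw
  have h1 : Dmu A α x (v - w) = 0 := by rw [map_sub, hvw, sub_self]
  exact sub_eq_zero.mp (h0 _ h1)

lemma hasFDerivAt_pot (hA : A.Nonempty) (hα : ∀ a ∈ A, 0 < α a) (x : Vm m) :
    HasFDerivAt (pot A α) (innerSL ℝ (mmap A α x)) x := by
  have hK := covK_pos hA hα x
  have h := ((hasFDerivAt_covK hA hα x).log hK.ne').const_mul (1/2 : ℝ)
  have heq : pot A α = fun y => (1/2 : ℝ) * Real.log (covK A α y) := rfl
  rw [heq]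
  refine h.congr_fderiv (Eq.symm ?_)
  ext v
  simp only [ContinuousLinearMap.smul_apply, innerSL_apply_apply, smul_eq_mul]
  field_simp

lemma contDiff_covK : ContDiff ℝ (⊤ : ℕ∞) (covK A α) := by
  refine ContDiff.sum fun a ha => contDiff_const.mul ?_
  exact (contDiff_const.mul (innerSL ℝ a).contDiff).exp

lemma contDiff_wt (hA : A.Nonempty) (hα : ∀ a ∈ A, 0 < α a) (a : Vm m) :
    ContDiff ℝ (⊤ : ℕ∞) (wt A α a) := by
  refine ContDiff.div ?_ contDiff_covK (fun x => (covK_pos hA hα x).ne')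
  exact contDiff_const.mul (contDiff_const.mul (innerSL ℝ a).contDiff).exp

lemma contDiff_mmap (hA : A.Nonempty) (hα : ∀ a ∈ A, 0 < α a) :
    ContDiff ℝ (⊤ : ℕ∞) (mmap A α) :=
  ContDiff.sum fun a _ => (contDiff_wt hA hα a).smul contDiff_const

lemma fderiv_mmap_bijective (hA : A.Nonempty) (hα : ∀ a ∈ A, 0 < α a)
    (hspan : affineSpan ℝ (A : Set (Vm m)) = ⊤) (x : Vm m) :
    Function.Bijective (fderiv ℝ (mmap A α) x) := by
  rw [(hasFDerivAt_mmap hA hα x).fderiv]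
  have hinj := Dmu_injective hA hα hspan x
  have hinj' : Function.Injective (Dmu A α x).toLinearMap := hinj
  exact ⟨hinj, (LinearMap.injective_iff_surjective.mp hinj')⟩

lemma mmap_injective (hA : A.Nonempty) (hα : ∀ a ∈ A, 0 < α a)
    (hspan : affineSpan ℝ (A : Set (Vm m)) = ⊤) :
    Function.Injective (mmap A α) := by
  intro x y hxy
  by_contra hne
  have hvne : x - y ≠ 0 := sub_ne_zero.mpr (fun h => hne h)
  set v := x - y with hv
  have hline : ∀ t : ℝ, HasDerivAt (fun t : ℝ => y + t • v) v t := by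
    intro t
    simpa using ((hasDerivAt_id t).smul_const v).const_add y
  have hd : ∀ t : ℝ, HasDerivAt (fun t : ℝ => ⟪v, mmap A α (y + t • v)⟫)
      (2 * atForm A α (y + t • v) v) t := by
    intro t
    have h1 : HasDerivAt (fun t : ℝ => mmap A α (y + t • v)) (Dmu A α (y + t • v) v) t :=
      (hasFDerivAt_mmap hA hα _).comp_hasDerivAt t (hline t)
    have h2 := (innerSL ℝ v).hasFDerivAt.comp_hasDerivAt t h1
    have : ⟪v, Dmu A α (y + t • v) v⟫ = 2 * atForm A α (y + t • v) v := by
      rw [real_inner_comm]; exact inner_Dmu hA hα _ _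
    have h3 : HasDerivAt (fun t : ℝ => ⟪v, mmap A α (y + t • v)⟫)
        ((innerSL ℝ v) (Dmu A α (y + t • v) v)) t := h2
    rw [innerSL_apply_apply, this] at h3
    exact h3
  have hmono : StrictMono (fun t : ℝ => ⟪v, mmap A α (y + t • v)⟫) := by
    refine strictMono_of_deriv_pos fun t => ?_
    rw [(hd t).deriv]
    have := atForm_pos hA hα hspan (y + t • v) hvne
    linarith
  have h01 := hmono zero_lt_one
  simp only [zero_smul, add_zero, one_smul] at h01
  rw [hv] at h01
  have : y + (x - y) = x := by abel
  rw [this, hxy] at h01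
  exact lt_irrefl _ h01

lemma combo_mem_interior (hA : A.Nonempty)
    (hspan : affineSpan ℝ (A : Set (Vm m)) = ⊤)
    {w : Vm m → ℝ} (hw : ∀ a ∈ A, 0 < w a) (hsum : ∑ a ∈ A, w a = 1) :
    (∑ a ∈ A, w a • a) ∈ interior (convexHull ℝ (A : Set (Vm m))) := by
  obtain ⟨q, hq⟩ := interior_convexHull_nonempty_iff_affineSpan_eq_top.mpr hspan
  have hqch : q ∈ convexHull ℝ (A : Set (Vm m)) := interior_subset hq
  rw [Finset.convexHull_eq] at hqch
  obtain ⟨c, hc0, hc1, hcq⟩ := hqch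
  have hcq' : ∑ a ∈ A, c a • a = q := by
    rw [← hcq, Finset.centerMass_eq_of_sum_1 _ _ hc1]; rfl
  set ε := (A.inf' hA w) / 2 with hε
  have hεw : ∀ a ∈ A, ε ≤ w a / 2 := fun a ha => by
    have := Finset.inf'_le w ha; rw [hε]; linarith
  have hε0 : 0 < ε := by
    obtain ⟨a0, ha0⟩ := id hA
    rw [hε]
    have := Finset.le_inf' hA w (fun a ha => (hw a ha).le)
    have h2 : 0 < A.inf' hA w := by
      obtain ⟨b, hb, hbe⟩ := Finset.exists_mem_eq_inf' hA w
      rw [hbe]; exact hw b hb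
    linarith
  have hwle1 : ∀ a ∈ A, w a ≤ 1 := fun a ha => by
    rw [← hsum]
    exact Finset.single_le_sum (fun b hb => (hw b hb).le) ha
  have hε1 : ε < 1 := by
    obtain ⟨a0, ha0⟩ := id hA
    have := hεw a0 ha0; have := hwle1 a0 ha0; linarith
  have hcle1 : ∀ a ∈ A, c a ≤ 1 := fun a ha => by
    rw [← hc1]
    exact Finset.single_le_sum hc0 ha
  have hnn : ∀ a ∈ A, 0 ≤ w a - ε * c a := fun a ha => by
    have h1 : ε * c a ≤ ε * 1 := by
      have := hcle1 a ha
      exact mul_le_mul_of_nonneg_left this hε0.le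
    have := hεw a ha; have := hw a ha
    nlinarith
  have hsum' : ∑ a ∈ A, (w a - ε * c a) = 1 - ε := by
    rw [Finset.sum_sub_distrib, hsum, ← Finset.mul_sum, hc1, mul_one]
  have hsumpos : 0 < ∑ a ∈ A, (w a - ε * c a) := by rw [hsum']; linarith
  have hrch : A.centerMass (fun a => w a - ε * c a) id ∈ convexHull ℝ (A : Set (Vm m)) :=
    A.centerMass_mem_convexHull hnn hsumpos (fun a ha => Finset.mem_coe.mpr ha)
  set r := A.centerMass (fun a => w a - ε * c a) id with hr
  have hcombo : (∑ a ∈ A, w a • a) = ε • q + (1 - ε) • r := by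
    rw [hr, Finset.centerMass, hsum', smul_smul, mul_inv_cancel₀ (by linarith)]
    rw [one_smul, ← hcq', Finset.smul_sum, ← Finset.sum_add_distrib]
    refine Finset.sum_congr rfl fun a ha => ?_
    simp only [id_eq, smul_smul]
    rw [← add_smul]
    congr 1
    ring
  rw [hcombo]
  exact (convex_convexHull ℝ _).combo_interior_self_mem_interior hq hrch hε0
    (by linarith) (by ring)

lemma exists_lower (hA : A.Nonempty) {p : Vm m}
    (hp : p ∈ interior (convexHull ℝ (A : Set (Vm m)))) :
    ∃ δ > 0, ∀ x : Vm m, ∃ a ∈ A, δ * ‖x‖ ≤ ⟪a, x⟫ - ⟪p, x⟫ := by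
  obtain ⟨ε, hε0, hball⟩ := Metric.mem_nhds_iff.mp (mem_interior_iff_mem_nhds.mp hp)
  refine ⟨ε / 2, by linarith, fun x => ?_⟩
  by_cases hx : x = 0
  · obtain ⟨a, ha⟩ := id hA
    exact ⟨a, ha, by simp [hx]⟩
  · have hxn : 0 < ‖x‖ := norm_pos_iff.mpr hx
    set z := p + (ε / 2 / ‖x‖) • x with hz
    have hzball : z ∈ Metric.ball p ε := by
      rw [Metric.mem_ball, hz, dist_self_add_left, norm_smul]
      rw [Real.norm_eq_abs, abs_of_pos (by positivity)]
      rw [div_mul_cancel₀ _ hxn.ne']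
      linarith
    have hzch : z ∈ convexHull ℝ (A : Set (Vm m)) := hball hzball
    have hlin : IsLinearMap ℝ (fun y : Vm m => ⟪y, x⟫) :=
      ⟨fun a b => inner_add_left a b x, fun c y => real_inner_smul_left y x c⟩
    have hhalf : convexHull ℝ (A : Set (Vm m)) ⊆
        {y : Vm m | ⟪y, x⟫ ≤ A.sup' hA (fun a => ⟪a, x⟫)} := by
      apply convexHull_min
      · intro a ha
        exact Finset.le_sup' (fun a => ⟪a, x⟫) ha
      · exact convex_halfSpace_le hlin _
    have hzs := hhalf hzch
    have hzval : ⟪z, x⟫ = ⟪p, x⟫ + ε / 2 * ‖x‖ := by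
      rw [hz, inner_add_left, real_inner_smul_left, real_inner_self_eq_norm_sq]
      field_simp
    rw [Set.mem_setOf_eq, hzval] at hzs
    obtain ⟨a, ha, hax⟩ := (Finset.le_sup'_iff hA).mp hzs
    exact ⟨a, ha, by linarith⟩

lemma pot_lower (hA : A.Nonempty) (hα : ∀ a ∈ A, 0 < α a) {a : Vm m} (ha : a ∈ A)
    (x : Vm m) : Real.log (α a) + ⟪a, x⟫ ≤ pot A α x := by
  have hE : (0:ℝ) < (α a) ^ 2 * Real.exp (2 * ⟪a, x⟫) :=
    mul_pos (pow_pos (hα a ha) 2) (Real.exp_pos _)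
  have hle : (α a) ^ 2 * Real.exp (2 * ⟪a, x⟫) ≤ covK A α x := by
    rw [covK]
    refine Finset.single_le_sum (f := fun b => (α b) ^ 2 * Real.exp (2 * ⟪b, x⟫))
      (fun b hb => ?_) ha
    exact (mul_pos (pow_pos (hα b hb) 2) (Real.exp_pos _)).le
  have hlog := Real.log_le_log hE hle
  rw [Real.log_mul (pow_ne_zero 2 (hα a ha).ne') (Real.exp_ne_zero _), Real.log_pow,
    Real.log_exp] at hlog
  rw [pot]
  push_cast at hlog
  linarith

lemma hasFDerivAt_F (hA : A.Nonempty) (hα : ∀ a ∈ A, 0 < α a) (p x : Vm m) :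
    HasFDerivAt (fun y => pot A α y - ⟪p, y⟫)
      (innerSL ℝ (mmap A α x) - innerSL ℝ p) x :=
  (hasFDerivAt_pot hA hα x).sub ((innerSL ℝ p).hasFDerivAt)

lemma mmap_surjOn (hA : A.Nonempty) (hα : ∀ a ∈ A, 0 < α a)
    {p : Vm m} (hp : p ∈ interior (convexHull ℝ (A : Set (Vm m)))) :
    ∃ x : Vm m, mmap A α x = p := by
  obtain ⟨δ, hδ0, hδ⟩ := exists_lower hA hp
  set L := A.inf' hA (fun a => Real.log (α a)) with hL
  set F := fun x : Vm m => pot A α x - ⟪p, x⟫ with hF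
  have hFcont : Continuous F :=
    continuous_iff_continuousAt.mpr fun x =>
      (hasFDerivAt_F hA hα p x).differentiableAt.continuousAt
  have hlb : ∀ x : Vm m, L + δ * ‖x‖ ≤ F x := by
    intro x
    obtain ⟨a, ha, hax⟩ := hδ x
    have h1 := pot_lower hA hα ha x
    have h2 : L ≤ Real.log (α a) := Finset.inf'_le _ ha
    simp only [hF]
    linarith
  set R := max 1 ((F 0 - L + 1) / δ) with hR
  have hR1 : (1:ℝ) ≤ R := le_max_left _ _
  have hR0 : (0:ℝ) < R := lt_of_lt_of_le one_pos hR1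
  have hcpt : IsCompact (Metric.closedBall (0 : Vm m) R) := isCompact_closedBall _ _
  have h0mem : (0 : Vm m) ∈ Metric.closedBall (0 : Vm m) R := by
    simp [Metric.mem_closedBall, hR0.le]
  obtain ⟨x₀, hx₀mem, hx₀min⟩ := hcpt.exists_isMinOn ⟨0, h0mem⟩ hFcont.continuousOn
  have hglobal : ∀ x, F x₀ ≤ F x := by
    intro x
    by_cases hx : x ∈ Metric.closedBall (0 : Vm m) R
    · exact hx₀min hx
    · have h0 : F x₀ ≤ F 0 := hx₀min h0mem
      have hxR : R < ‖x‖ := by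
        simpa [Metric.mem_closedBall, dist_zero_right, not_le] using hx
      have hRge : (F 0 - L + 1) / δ ≤ R := le_max_right _ _
      have hRd : F 0 - L + 1 ≤ δ * R := by
        rw [div_le_iff₀ hδ0] at hRge
        linarith [hRge]
      have hmono : δ * R ≤ δ * ‖x‖ := by nlinarith
      have := hlb x
      linarith
  have hloc : IsLocalMin F x₀ := Filter.Eventually.of_forall hglobal
  have hzero := hloc.hasFDerivAt_eq_zero (hasFDerivAt_F hA hα p x₀)
  refine ⟨x₀, ?_⟩
  have happ := congrArg (fun T : Vm m →L[ℝ] ℝ => T (mmap A α x₀ - p)) hzero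
  simp only [ContinuousLinearMap.sub_apply, innerSL_apply_apply,
    ContinuousLinearMap.zero_apply] at happ
  have h2 : ⟪mmap A α x₀ - p, mmap A α x₀ - p⟫ = 0 := by
    rw [inner_sub_left]
    linarith [happ]
  exact sub_eq_zero.mp (inner_self_eq_zero.mp h2)

lemma mmap_mem_interior (hA : A.Nonempty) (hα : ∀ a ∈ A, 0 < α a)
    (hspan : affineSpan ℝ (A : Set (Vm m)) = ⊤) (x : Vm m) :
    mmap A α x ∈ interior (convexHull ℝ (A : Set (Vm m))) := by
  rw [mmap]
  exact combo_mem_interior hA hspan (fun a ha => wt_pos hA hα ha x) (sum_wt hA hα x)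

end S1

/-- If the affine span of `A` is all of `ℝ^m`, the moment map `μ` is a
diffeomorphism from `ℝ^m` onto the interior of the Newton polytope `P = conv(A)`:
it is smooth, injective, its differential at every point is invertible, its values lie
in the interior of `P`, and it attains every point of the interior of `P`. -/
theorem statement1 (m : ℕ) (hm : 1 ≤ m) (A : Finset (Vm m)) (hA : A.Nonempty)
    (α : Vm m → ℝ) (hα : ∀ a ∈ A, 0 < α a)
    (hspan : affineSpan ℝ (A : Set (Vm m)) = ⊤) :
    ContDiff ℝ (⊤ : ℕ∞) (mmap A α) ∧
    Function.Injective (mmap A α) ∧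
    (∀ x : Vm m, Function.Bijective (fderiv ℝ (mmap A α) x)) ∧
    (∀ x : Vm m, mmap A α x ∈ interior (convexHull ℝ (A : Set (Vm m)))) ∧
    (∀ p ∈ interior (convexHull ℝ (A : Set (Vm m))), ∃ x : Vm m, mmap A α x = p) :=
  ⟨S1.contDiff_mmap hA hα, S1.mmap_injective hA hα hspan,
    S1.fderiv_mmap_bijective hA hα hspan, S1.mmap_mem_interior hA hα hspan,
    fun _ hp => S1.mmap_surjOn hA hα hp⟩
end
end

section
/- For every x ∈ ℝ^m and every v ∈ ℝ^m one has the identity (g₀)_x(v) = (K(x)/K₀(x))·( g_x(v) + (τ(x)(v))² ), i.e. the Adler–Taylor quadratic form of the augmented family f₀, f₁, …, f_d equals (K/K₀) times the sum of the Adler–Taylor quadratic form of f₁, …, f_d and the square of the linear form τ. -/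
open scoped BigOperators
open Finset

noncomputable section

/-- `K(x) = Σ_{i=1}^d f_i(x)²`. -/
def Kf {m d : ℕ} (f : Fin d → Vm m → ℝ) (x : Vm m) : ℝ := ∑ i, f i x ^ 2

/-- `K₀(x) = K(x) + f₀(x)²`. -/
def K0f {m d : ℕ} (f0 : Vm m → ℝ) (f : Fin d → Vm m → ℝ) (x : Vm m) : ℝ :=
  Kf f x + f0 x ^ 2

/-- The moment one-form `μ(x)(v) = (1/K(x)) Σ_{i=1}^d f_i(x)·D_x f_i(v)`. -/
def muf {m d : ℕ} (f : Fin d → Vm m → ℝ) (x v : Vm m) : ℝ :=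
  (1 / Kf f x) * ∑ i, f i x * fderiv ℝ (f i) x v

/-- The augmented moment one-form
`μ₀(x)(v) = (1/K₀(x)) Σ_{i=0}^d f_i(x)·D_x f_i(v)`. -/
def mu0f {m d : ℕ} (f0 : Vm m → ℝ) (f : Fin d → Vm m → ℝ) (x v : Vm m) : ℝ :=
  (1 / K0f f0 f x) * (f0 x * fderiv ℝ f0 x v + ∑ i, f i x * fderiv ℝ (f i) x v)

/-- The Adler–Taylor quadratic form
`g_x(v) = (1/K(x)) Σ_{i=1}^d (D_x f_i(v))² − (μ(x)(v))²`. -/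
def gf {m d : ℕ} (f : Fin d → Vm m → ℝ) (x v : Vm m) : ℝ :=
  (1 / Kf f x) * ∑ i, (fderiv ℝ (f i) x v) ^ 2 - (muf f x v) ^ 2

/-- The Adler–Taylor quadratic form of the augmented family
`(g₀)_x(v) = (1/K₀(x)) Σ_{i=0}^d (D_x f_i(v))² − (μ₀(x)(v))²`. -/
def g0f {m d : ℕ} (f0 : Vm m → ℝ) (f : Fin d → Vm m → ℝ) (x v : Vm m) : ℝ :=
  (1 / K0f f0 f x) * ((fderiv ℝ f0 x v) ^ 2 + ∑ i, (fderiv ℝ (f i) x v) ^ 2)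
    - (mu0f f0 f x v) ^ 2

/-- The one-form `τ(x) = (1/√K₀(x))·( f₀(x)·μ(x) − D_x f₀ )`. -/
def tauf {m d : ℕ} (f0 : Vm m → ℝ) (f : Fin d → Vm m → ℝ) (x v : Vm m) : ℝ :=
  (1 / Real.sqrt (K0f f0 f x)) * (f0 x * muf f x v - fderiv ℝ f0 x v)

/-- `(g₀)_x(v) = (K(x)/K₀(x))·( g_x(v) + (τ(x)(v))² )`. -/
theorem statement3 (m d : ℕ) (hm : 1 ≤ m) (hd : 1 ≤ d)
    (f0 : Vm m → ℝ) (f : Fin d → Vm m → ℝ)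
    (hf0 : ContDiff ℝ (⊤ : ℕ∞) f0) (hf : ∀ i, ContDiff ℝ (⊤ : ℕ∞) (f i))
    (hK : ∀ x : Vm m, 0 < ∑ i, f i x ^ 2) :
    ∀ x v : Vm m,
      g0f f0 f x v = (Kf f x / K0f f0 f x) * (gf f x v + (tauf f0 f x v) ^ 2) := by
  intro x v
  have hKpos : 0 < Kf f x := hK x
  have hK0pos : 0 < K0f f0 f x := by
    have : 0 ≤ f0 x ^ 2 := sq_nonneg _
    unfold K0f; linarith
  have hsq : (1 / Real.sqrt (K0f f0 f x)) ^ 2 = 1 / K0f f0 f x := by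
    rw [div_pow, one_pow, Real.sq_sqrt hK0pos.le]
  unfold g0f gf tauf mu0f muf
  rw [mul_pow (1 / Real.sqrt (K0f f0 f x)), hsq]
  unfold K0f
  set K := Kf f x
  set a := f0 x
  set b := fderiv ℝ f0 x v
  set S := ∑ i, f i x * fderiv ℝ (f i) x v
  set Q := ∑ i, (fderiv ℝ (f i) x v) ^ 2
  have hK0ne : K + a ^ 2 ≠ 0 := by positivity
  field_simp
  ring
end
end

section
/- Tensor product and Aronszajn multiplication of coefficient families commute: for every c₁ ∈ A+A' and c₂ ∈ B+B', one has ((α⊗β) ⊙ (α'⊗β'))_{(c₁,c₂)} = (α⊙α')_{c₁} · (β⊙β')_{c₂}. -/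
open scoped BigOperators Classical Pointwise
open Finset

noncomputable section

/-- The Aronszajn multiplication of positive coefficient families on finite subsets of
an additive group: for `c` in the Minkowski sum `S + S'`,
`(γ⊙γ')_c = sqrt( Σ_{s∈S, s'∈S', s+s'=c} γ_s²·γ'_{s'}² )`. -/
def aron {V : Type*} [AddCommGroup V] (S S' : Finset V) (γ γ' : V → ℝ) (c : V) : ℝ :=
  Real.sqrt (∑ p ∈ (S ×ˢ S').filter (fun p => p.1 + p.2 = c), (γ p.1) ^ 2 * (γ' p.2) ^ 2)

/-- The tensor product of coefficient families: `(γ⊗δ)_{(s,t)} = γ_s·δ_t`. -/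
def tens {V W : Type*} (γ : V → ℝ) (δ : W → ℝ) : V × W → ℝ :=
  fun p => γ p.1 * δ p.2

/-- Tensor product and Aronszajn multiplication commute: for
`c₁ ∈ A + A'` and `c₂ ∈ B + B'`,
`((α⊗β) ⊙ (α'⊗β'))_{(c₁,c₂)} = (α⊙α')_{c₁} · (β⊙β')_{c₂}`. -/
theorem statement10 (m n : ℕ)
    (A A' : Finset (Vm m)) (B B' : Finset (Vm n))
    (hA : A.Nonempty) (hA' : A'.Nonempty) (hB : B.Nonempty) (hB' : B'.Nonempty)
    (α : Vm m → ℝ) (α' : Vm m → ℝ) (β : Vm n → ℝ) (β' : Vm n → ℝ)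
    (hα : ∀ a ∈ A, 0 < α a) (hα' : ∀ a ∈ A', 0 < α' a)
    (hβ : ∀ b ∈ B, 0 < β b) (hβ' : ∀ b ∈ B', 0 < β' b)
    (c1 : Vm m) (hc1 : c1 ∈ A + A') (c2 : Vm n) (hc2 : c2 ∈ B + B') :
    aron (A ×ˢ B) (A' ×ˢ B') (tens α β) (tens α' β') (c1, c2)
      = aron A A' α α' c1 * aron B B' β β' c2 := by
  unfold aron
  rw [← Real.sqrt_mul (by positivity)]
  congr 1
  rw [Finset.sum_mul_sum, ← Finset.sum_product']
  refine Finset.sum_nbij' (fun p => ((p.1.1, p.2.1), (p.1.2, p.2.2)))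
    (fun q => ((q.1.1, q.2.1), (q.1.2, q.2.2))) ?_ ?_ ?_ ?_ ?_
  · rintro ⟨⟨a, b⟩, ⟨a', b'⟩⟩ hp
    simp only [Finset.mem_filter, Finset.mem_product, Prod.mk.injEq, Prod.ext_iff] at hp ⊢
    tauto
  · rintro ⟨⟨a, a'⟩, ⟨b, b'⟩⟩ hq
    simp only [Finset.mem_filter, Finset.mem_product, Prod.mk.injEq, Prod.ext_iff] at hq ⊢
    tauto
  · rintro ⟨⟨a, b⟩, ⟨a', b'⟩⟩ _; rfl
  · rintro ⟨⟨a, a'⟩, ⟨b, b'⟩⟩ _; rfl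
  · rintro ⟨⟨a, b⟩, ⟨a', b'⟩⟩ _
    simp [tens]; ring
end
end
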